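/- Let N be a (C,D)-bicomodule and assume D (as a left B-module) preserves the equalizer of (ρ_Y ⊗_A N, Y ⊗_A λ_N) for every right C-comodule Y. If N is quasi-finite as a right D-comodule, i.e. − ⊗_A N: Mod-A → Comod-D has a left adjoint h_D(N,−), then h_D(N,−), viewed as a functor Comod-D → Comod-C via the induced C-coaction, is left adjoint to the cotensor functor − □_C N: Comod-C → Comod-D. -/

import Mathlib

/-! # Preamble: corings and comodules
We follow "Separable functors in corings" (J. Gómez-Torrecillas).
`K`-algebras are monoid objects in `ModuleCat K`; a `T`-`A`-bimodule is a
1-morphism `T ⟶ A` in the bicategory of algebras and bimodules, whose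
composition is the tensor product over the middle algebra. -/

open CategoryTheory Limits Bicategory

noncomputable section
universe u

namespace CoringSep

variable (K : Type u) [CommRing K]

open MonoidalCategory in
instance (X : ModuleCat.{u} K) : PreservesColimitsOfSize.{0,0} (tensorLeft X) := by
  have : PreservesColimits (tensorLeft X) := (ihom.adjunction X).leftAdjoint_preservesColimits
  exact preservesSmallestColimits_of_preservesColimits _

open MonoidalCategory in
instance (X : ModuleCat.{u} K) : PreservesColimitsOfSize.{0,0} (tensorRight X) := by
  have : PreservesColimits (tensorRight X) :=
    preservesColimits_of_natIso
      (NatIso.ofComponents (fun Y => β_ X Y) (fun f => by simp) :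
        tensorLeft X ≅ tensorRight X)
  exact preservesSmallestColimits_of_preservesColimits _

/-- `K`-algebras (as monoid objects in `K`-modules), wrapped so that they form
a bicategory whose 1-morphisms `A ⟶ B` are `A`-`B`-bimodules and where
composition of 1-morphisms is `⊗_B`. -/
structure Alg where
  val : Mon (ModuleCat.{u} K)

variable {K}

instance : Bicategory (Alg K) where
  Hom X Y := Bimod X.val Y.val
  homCategory X Y := (inferInstance : Category (Bimod X.val Y.val))
  id X := Bimod.regular X.val
  comp M N := M.tensorBimod N
  whiskerLeft L _ _ f := Bimod.whiskerLeft L f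
  whiskerRight f N := Bimod.whiskerRight f N
  associator := Bimod.associatorBimod
  leftUnitor := Bimod.leftUnitorBimod
  rightUnitor := Bimod.rightUnitorBimod
  whiskerLeft_id _ _ := Bimod.whiskerLeft_id_bimod
  whiskerLeft_comp M _ _ _ f g := Bimod.whiskerLeft_comp_bimod M f g
  id_whiskerLeft := Bimod.id_whiskerLeft_bimod
  comp_whiskerLeft M N _ _ f := Bimod.comp_whiskerLeft_bimod M N f
  id_whiskerRight _ _ := Bimod.id_whiskerRight_bimod
  comp_whiskerRight f g Q := Bimod.comp_whiskerRight_bimod f g Q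
  whiskerRight_id := Bimod.whiskerRight_id_bimod
  whiskerRight_comp := Bimod.whiskerRight_comp_bimod
  whisker_assoc M _ _ f P := Bimod.whisker_assoc_bimod M f P
  whisker_exchange := Bimod.whisker_exchange_bimod
  pentagon := Bimod.pentagon_bimod
  triangle := Bimod.triangle_bimod

variable (K) in
/-- The base ring `K`, as a `K`-algebra; right `A`-modules are the
1-morphisms `base K ⟶ A`. -/
def base : Alg K := ⟨Mon.trivial (ModuleCat.{u} K)⟩

variable {a b s t : Alg K}

/-- An `A`-coring: an `A`-bimodule `X` together with a coassociative,
counital `A`-bimodule comultiplication `X ⟶ X ⊗_A X`. -/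
structure Coring (a : Alg K) where
  X : a ⟶ a
  comul : X ⟶ X ≫ X
  counit : X ⟶ 𝟙 a
  coassoc : comul ≫ comul ▷ X ≫ (α_ X X X).hom = comul ≫ X ◁ comul
  comul_counit : comul ≫ X ◁ counit ≫ (ρ_ X).hom = 𝟙 X
  counit_comul : comul ≫ counit ▷ X ≫ (λ_ X).hom = 𝟙 X

/-- A right `C`-comodule which is a `T`-`A`-bimodule with `T`-linear coaction;
plain right `C`-comodules are obtained for `T = base K`. -/
structure RightComodule (t : Alg K) {a : Alg K} (C : Coring a) where
  M : t ⟶ a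
  coact : M ⟶ M ≫ C.X
  coassoc : coact ≫ coact ▷ C.X ≫ (α_ M C.X C.X).hom = coact ≫ M ◁ C.comul
  counit : coact ≫ M ◁ C.counit ≫ (ρ_ M).hom = 𝟙 M

/-- A left `C`-comodule which is an `A`-`S`-bimodule with `S`-linear coaction. -/
structure LeftComodule {a : Alg K} (C : Coring a) (s : Alg K) where
  M : a ⟶ s
  coact : M ⟶ C.X ≫ M
  coassoc : coact ≫ C.comul ▷ M ≫ (α_ C.X C.X M).hom = coact ≫ C.X ◁ coact
  counit : coact ≫ C.counit ▷ M ≫ (λ_ M).hom = 𝟙 M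

/-- A `C'`-`C`-bicomodule. -/
structure Bicomodule {a' a : Alg K} (C' : Coring a') (C : Coring a) where
  M : a' ⟶ a
  rcoact : M ⟶ M ≫ C.X
  lcoact : M ⟶ C'.X ≫ M
  rcoassoc : rcoact ≫ rcoact ▷ C.X ≫ (α_ M C.X C.X).hom = rcoact ≫ M ◁ C.comul
  rcounit : rcoact ≫ M ◁ C.counit ≫ (ρ_ M).hom = 𝟙 M
  lcoassoc : lcoact ≫ C'.comul ▷ M ≫ (α_ C'.X C'.X M).hom = lcoact ≫ C'.X ◁ lcoact
  lcounit : lcoact ≫ C'.counit ▷ M ≫ (λ_ M).hom = 𝟙 M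
  compat : rcoact ≫ lcoact ▷ C.X ≫ (α_ C'.X M C.X).hom = lcoact ≫ C'.X ◁ rcoact

variable {C : Coring a}

/-- The right comodule underlying a bicomodule. -/
def Bicomodule.toRight {a' : Alg K} {C' : Coring a'} (M : Bicomodule C' C) :
    RightComodule a' C := ⟨M.M, M.rcoact, M.rcoassoc, M.rcounit⟩

/-- The left comodule underlying a bicomodule. -/
def Bicomodule.toLeft {a' : Alg K} {C' : Coring a'} (M : Bicomodule C' C) :
    LeftComodule C' a := ⟨M.M, M.lcoact, M.lcoassoc, M.lcounit⟩

/-- The coring `C`, considered as a right comodule over itself. -/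
def coregular (C : Coring a) : RightComodule a C :=
  ⟨C.X, C.comul, C.coassoc, C.comul_counit⟩

/-- Morphisms of right `C`-comodules. -/
@[ext] structure ComodHom (M N : RightComodule t C) where
  f : M.M ⟶ N.M
  colinear : M.coact ≫ f ▷ C.X = f ≫ N.coact

instance : Category (RightComodule t C) where
  Hom := ComodHom
  id M := ⟨𝟙 M.M, by simp⟩
  comp f g := ⟨f.f ≫ g.f, by
    rw [Bicategory.comp_whiskerRight, ← Category.assoc, f.colinear, Category.assoc, g.colinear,
      Category.assoc]⟩

@[simp] theorem comod_id_f (M : RightComodule t C) : (𝟙 M : ComodHom M M).f = 𝟙 M.M := rfl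
@[simp] theorem comod_comp_f {M N P : RightComodule t C} (f : M ⟶ N) (g : N ⟶ P) :
    (f ≫ g).f = f.f ≫ g.f := rfl

@[ext] theorem comodHom_ext' {M N : RightComodule t C} (f g : M ⟶ N) (h : f.f = g.f) : f = g :=
  ComodHom.ext h

/-- The category of (plain) right comodules over a coring. -/
abbrev Comod (C : Coring a) := RightComodule (base K) C

@[simp] lemma bimod_comp_hom {x y : Alg K} {M N P : x ⟶ y} (f : M ⟶ N) (g : N ⟶ P) :
    (f ≫ g).hom = f.hom ≫ g.hom := rfl

@[simp] lemma bimod_id_hom {x y : Alg K} (M : x ⟶ y) :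
    Bimod.Hom.hom (𝟙 M) = 𝟙 M.X := rfl

/-- The forgetful functor from right `C`-comodules to the underlying
bimodule (module) category. -/
def forgetComod (t : Alg K) (C : Coring a) : RightComodule t C ⥤ (t ⟶ a) where
  obj M := M.M
  map f := f.f

/-- The functor `- ⊗_A N` given by postcomposition with a 1-morphism (an
`A`-`S`-bimodule) `N`. -/
def postF (t : Alg K) (N : a ⟶ s) : (t ⟶ a) ⥤ (t ⟶ s) where
  obj M := M ≫ N
  map f := f ▷ N

/-- The functor `W ⊗_A -` given by precomposition with a `T`-`A`-bimodule `W`. -/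
def preF (W : t ⟶ a) (s : Alg K) : (a ⟶ s) ⥤ (t ⟶ s) where
  obj N := W ≫ N
  map f := W ◁ f

/-- A functor *preserves the equalizer* of a pair `(f, g)` if it sends any
equalizer fork of `(f, g)` to a limit cone. -/
def PreservesEqualizerOf {𝒞 𝒟 : Type*} [Category 𝒞] [Category 𝒟] (F : 𝒞 ⥤ 𝒟)
    {X Y : 𝒞} (f g : X ⟶ Y) : Prop :=
  ∀ c : Fork f g, IsLimit c → Nonempty (IsLimit (F.mapCone c))

/-- `N` is flat as a left `A`-module: `- ⊗_A N` preserves all equalizers of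
right `A`-module maps. -/
def LeftFlat (N : a ⟶ s) : Prop :=
  ∀ (t : Alg K) {X Y : t ⟶ a} (f g : X ⟶ Y), PreservesEqualizerOf (postF t N) f g

/-- `W` is flat as a right `A`-module: `W ⊗_A -` preserves all equalizers of
left `A`-module maps. -/
def RightFlat (W : t ⟶ a) : Prop :=
  ∀ (s : Alg K) {X Y : a ⟶ s} (f g : X ⟶ Y), PreservesEqualizerOf (preF W s) f g

section Cotensor

/-- The first map `ρ_M ⊗_A N` in the equalizer diagram defining the cotensor
product `M □_C N`. -/
def cotensorFst (M : RightComodule t C) (N : LeftComodule C s) :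
    M.M ≫ N.M ⟶ (M.M ≫ C.X) ≫ N.M :=
  M.coact ▷ N.M

/-- The second map `M ⊗_A λ_N` in the equalizer diagram defining `M □_C N`. -/
def cotensorSnd (M : RightComodule t C) (N : LeftComodule C s) :
    M.M ≫ N.M ⟶ (M.M ≫ C.X) ≫ N.M :=
  M.M ◁ N.coact ≫ (α_ M.M C.X N.M).inv

/-- A choice of cotensor product `M □_C N`: an equalizer of the pair
`(ρ_M ⊗_A N, M ⊗_A λ_N)` in the category of `T`-`S`-bimodules. -/
structure CotensorFork (M : RightComodule t C) (N : LeftComodule C s) where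
  pt : t ⟶ s
  ι : pt ⟶ M.M ≫ N.M
  w : ι ≫ cotensorFst M N = ι ≫ cotensorSnd M N
  isLimit : IsLimit (Fork.ofι ι w)

end Cotensor

/-- A functor `F` is *separable* if the natural transformation
`Hom(-,-) ⟶ Hom(F-,F-)` of bifunctors is a split monomorphism, i.e. admits a
retraction `ζ` natural in both variables. -/
def Functor.Separable {𝒞 𝒟 : Type*} [Category 𝒞] [Category 𝒟] (F : 𝒞 ⥤ 𝒟) : Prop :=
  ∃ ζ : ∀ X Y : 𝒞, (F.obj X ⟶ F.obj Y) → (X ⟶ Y),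
    (∀ (X Y : 𝒞) (f : X ⟶ Y), ζ X Y (F.map f) = f) ∧
    (∀ (X X' Y Y' : 𝒞) (x : X' ⟶ X) (y : Y ⟶ Y') (h : F.obj X ⟶ F.obj Y),
      ζ X' Y' (F.map x ≫ h ≫ F.map y) = x ≫ ζ X Y h ≫ y)

end CoringSep
namespace CoringSep
open CategoryTheory Limits Bicategory

variable {K : Type u} [CommRing K] {a b s t : Alg K} {C : Coring a} {D : Coring b}

/-- The right `D`-comodule `X ⊗_A N` obtained by tensoring a right `D`-comodule
`N` (with underlying `A`-`B`-bimodule) by a `T`-`A`-bimodule `X`. -/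
def lextendObj (X : t ⟶ a) (N : RightComodule a D) : RightComodule t D where
  M := X ≫ N.M
  coact := X ◁ N.coact ≫ (α_ X N.M D.X).inv
  coassoc := by
    have hc : (α_ X (N.M ≫ D.X) D.X).inv ≫ (α_ X N.M D.X).inv ▷ D.X ≫
        (α_ (X ≫ N.M) D.X D.X).hom =
        X ◁ (α_ N.M D.X D.X).hom ≫ (α_ X N.M (D.X ≫ D.X)).inv := by
      bicategory_coherence
    simp only [Bicategory.comp_whiskerRight, Bicategory.whisker_assoc,
      Bicategory.comp_whiskerLeft, Category.assoc, Iso.inv_hom_id_assoc]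
    rw [hc, ← Bicategory.whiskerLeft_comp_assoc, ← Bicategory.whiskerLeft_comp_assoc,
      Category.assoc, N.coassoc]
    simp only [Bicategory.whiskerLeft_comp, Category.assoc]
  counit := by
    simp only [Bicategory.comp_whiskerLeft, Category.assoc, Iso.inv_hom_id_assoc]
    rw [← whiskerLeft_rightUnitor]
    simp only [← Bicategory.whiskerLeft_comp, Category.assoc]
    rw [N.counit]
    simp
end CoringSep

namespace CoringSep
open CategoryTheory Limits Bicategory

variable {K : Type u} [CommRing K] {a b s t : Alg K} {C : Coring a} {D : Coring b}

/-- The functor `- ⊗_A N : Mod-(T,A) ⥤ Comod-(T,D)` induced by a right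
`D`-comodule `N` with underlying `A`-`B`-bimodule. -/
def lextendF (t : Alg K) (N : RightComodule a D) : (t ⟶ a) ⥤ RightComodule t D where
  obj X := lextendObj X N
  map {X Y} f :=
    ⟨f ▷ N.M, by
      dsimp [lextendObj]
      rw [Category.assoc, ← associator_inv_naturality_left, whisker_exchange_assoc]⟩
  map_id X := by ext; simp [lextendObj]
  map_comp f g := by ext; simp [lextendObj]

end CoringSep

namespace CoringSep
open CategoryTheory Limits

section Helpers
open MonoidalCategory
variable {K : Type u} [CommRing K]

lemma triv_one_act (X : ModuleCat.{u} K) :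
    ((𝟙 (𝟙_ (ModuleCat K))) ▷ X) ≫ (λ_ X).hom = (λ_ X).hom := by simp

lemma triv_left_assoc (X : ModuleCat.{u} K) :
    ((λ_ (𝟙_ (ModuleCat K))).hom ▷ X) ≫ (λ_ X).hom =
      (α_ (𝟙_ (ModuleCat K)) (𝟙_ (ModuleCat K)) X).hom ≫
        ((𝟙_ (ModuleCat K)) ◁ (λ_ X).hom) ≫ (λ_ X).hom := by
  coherence

lemma triv_middle_assoc {Y : ModuleCat.{u} K} (X : ModuleCat.{u} K) (act : X ⊗ Y ⟶ X) :
    ((λ_ X).hom ▷ Y) ≫ act =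
      (α_ (𝟙_ (ModuleCat K)) X Y).hom ≫ ((𝟙_ (ModuleCat K)) ◁ act) ≫ (λ_ X).hom := by
  have e : (λ_ X).hom ▷ Y = (α_ (𝟙_ (ModuleCat K)) X Y).hom ≫ (λ_ (X ⊗ Y)).hom := by
    monoidal
  rw [MonoidalCategory.leftUnitor_naturality, e, Category.assoc]

lemma triv_nat {X Y : ModuleCat.{u} K} (f : X ⟶ Y) :
    (λ_ X).hom ≫ f = ((𝟙_ (ModuleCat K)) ◁ f) ≫ (λ_ Y).hom :=
  (MonoidalCategory.leftUnitor_naturality f).symm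

end Helpers

variable {K : Type u} [CommRing K] {a t t' : Alg K}

lemma base_actLeft (P : base K ⟶ t') :
    P.actLeft = (MonoidalCategory.leftUnitor P.X).hom := by
  have h := P.one_actLeft
  have h1 : (MonObj.one : _ ⟶ (base K).val.X) = 𝟙 _ := rfl
  rw [h1] at h
  have h2 : P.actLeft = MonoidalCategoryStruct.whiskerRight (𝟙 (base K).val.X) P.X ≫ P.actLeft := by
    rw [MonoidalCategory.id_whiskerRight, Category.id_comp]
  rw [h2]
  exact h

/-- Forgetting the left `T`-action of a `T`-`A`-bimodule: restriction of
scalars along `K → T`. -/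
def resBase (t a : Alg K) : (t ⟶ a) ⥤ (base K ⟶ a) where
  obj M :=
    { X := M.X
      actLeft := (MonoidalCategory.leftUnitor M.X).hom
      one_actLeft := triv_one_act M.X
      left_assoc := triv_left_assoc M.X
      actRight := M.actRight
      actRight_one := M.actRight_one
      right_assoc := M.right_assoc
      middle_assoc := triv_middle_assoc M.X M.actRight }
  map f := { hom := f.hom
             left_act_hom := triv_nat f.hom
             right_act_hom := f.right_act_hom }
  map_id _ := rfl
  map_comp _ _ := rfl


variable {C : Coring a}

/-- The coaction of a `(T,C)`-bicomodule, as a morphism of the underlying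
plain bimodules. -/
def resCoact (M : RightComodule t C) :
    (resBase t a).obj M.M ⟶ (resBase t a).obj M.M ≫ C.X where
  hom := M.coact.hom
  left_act_hom := by
    rw [base_actLeft ((resBase t a).obj M.M ≫ C.X)]
    exact triv_nat M.coact.hom
  right_act_hom := M.coact.right_act_hom

/-- A comodule morphism, restricted. -/
def resMap {M N : RightComodule t C} (f : M ⟶ N) :
    (resBase t a).obj M.M ⟶ (resBase t a).obj N.M where
  hom := f.f.hom
  left_act_hom := triv_nat f.f.hom
  right_act_hom := f.f.right_act_hom

set_option maxHeartbeats 1600000 in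
/-- Forgetting the left `T`-action of a `(T,C)`-bicomodule: the underlying
plain right `C`-comodule. -/
def resComod (t : Alg K) (C : Coring a) : RightComodule t C ⥤ Comod C where
  obj M :=
    { M := (resBase t a).obj M.M
      coact := resCoact M
      coassoc := by
        apply Bimod.hom_ext
        show (M.coact ≫ M.coact ▷ C.X ≫ (α_ M.M C.X C.X).hom).hom =
          (M.coact ≫ M.M ◁ C.comul).hom
        exact congrArg Bimod.Hom.hom M.coassoc
      counit := by
        apply Bimod.hom_ext
        show (M.coact ≫ M.M ◁ C.counit ≫ (ρ_ M.M).hom).hom = Bimod.Hom.hom (𝟙 M.M)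
        exact congrArg Bimod.Hom.hom M.counit }
  map {M N} f := ⟨resMap f, by
    apply Bimod.hom_ext
    show (M.coact ≫ f.f ▷ C.X).hom = (f.f ≫ N.coact).hom
    exact congrArg Bimod.Hom.hom f.colinear⟩
  map_id _ := rfl
  map_comp _ _ := rfl

end CoringSep

namespace CoringSep
open CategoryTheory Limits Bicategory

variable {K : Type u} [CommRing K] {a b : Alg K} {C : Coring a} {D : Coring b}

/-- A choice of cotensor-product functor `- □_C N : Comod-C ⥤ Comod-D` for a
`(C,D)`-bicomodule `N`: a functor together with natural equalizer data
exhibiting each `G(Y)` as the cotensor product `Y □_C N ⊆ Y ⊗_A N`. -/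
structure CotensorFunctor (N : Bicomodule C D) where
  G : Comod C ⥤ Comod D
  ι : ∀ Y : Comod C, (G.obj Y).M ⟶ Y.M ≫ N.M
  w : ∀ Y : Comod C, ι Y ≫ cotensorFst Y N.toLeft = ι Y ≫ cotensorSnd Y N.toLeft
  isLimit : ∀ Y : Comod C, IsLimit (Fork.ofι (ι Y) (w Y))
  colinear : ∀ Y : Comod C,
    (G.obj Y).coact ≫ ι Y ▷ D.X = ι Y ≫ Y.M ◁ N.rcoact ≫ (α_ Y.M N.M D.X).inv
  natural : ∀ {Y Y' : Comod C} (f : Y ⟶ Y'), (G.map f).f ≫ ι Y' = ι Y ≫ f.f ▷ N.M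

end CoringSep

namespace CoringSep
open CategoryTheory Limits Bicategory

section S11Aux

variable {K : Type u} [CommRing K] {a b : Alg K} {C : Coring a} {D : Coring b}

lemma s11_eqToHom_whiskerRight {x y z : Alg K} {M M' : x ⟶ y} (h : M = M') (Z : y ⟶ z)
    (h2 : M ≫ Z = M' ≫ Z) : eqToHom h ▷ Z = eqToHom h2 := by
  subst h; simp

lemma s11_homEquiv_f (N : Bicomodule C D) (H : Comod D ⥤ (base K ⟶ a))
    (adj : H ⊣ lextendF (base K) N.toRight)
    (X : Comod D) {M : base K ⟶ a} (φ : H.obj X ⟶ M) :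
    ((adj.homEquiv X M) φ).f = (adj.unit.app X).f ≫ φ ▷ N.M := by
  rw [Adjunction.homEquiv_unit]; rfl

lemma s11_adj_inj (N : Bicomodule C D) (H : Comod D ⥤ (base K ⟶ a))
    (adj : H ⊣ lextendF (base K) N.toRight)
    (X : Comod D) {M : base K ⟶ a} {φ₁ φ₂ : H.obj X ⟶ M}
    (h : (adj.unit.app X).f ≫ φ₁ ▷ N.M = (adj.unit.app X).f ≫ φ₂ ▷ N.M) :
    φ₁ = φ₂ := by
  apply (adj.homEquiv X M).injective
  apply comodHom_ext'
  rw [s11_homEquiv_f, s11_homEquiv_f, h]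

lemma s11_key (N : Bicomodule C D) (H : Comod D ⥤ (base K ⟶ a))
    (adj : H ⊣ lextendF (base K) N.toRight)
    (X : Comod D) {M : base K ⟶ a}
    (κ : H.obj X ⟶ H.obj X ≫ C.X)
    (hκ : (adj.unit.app X).f ≫ H.obj X ◁ N.lcoact ≫ (α_ (H.obj X) C.X N.M).inv
        = (adj.unit.app X).f ≫ κ ▷ N.M)
    (f' : H.obj X ⟶ M) :
    (adj.unit.app X).f ≫ (κ ≫ f' ▷ C.X) ▷ N.M
      = (adj.unit.app X).f ≫ f' ▷ N.M ≫ M ◁ N.lcoact ≫ (α_ M C.X N.M).inv := by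
  have key : ∀ (u : X.M ⟶ H.obj X ≫ N.M),
      u ≫ H.obj X ◁ N.lcoact ≫ (α_ (H.obj X) C.X N.M).inv = u ≫ κ ▷ N.M →
      u ≫ (κ ≫ f' ▷ C.X) ▷ N.M = u ≫ f' ▷ N.M ≫ M ◁ N.lcoact ≫ (α_ M C.X N.M).inv := by
    intro u hκ
    rw [comp_whiskerRight, ← Category.assoc, ← hκ]
    simp only [Category.assoc]
    rw [← associator_inv_naturality_left]
    slice_lhs 2 3 => rw [whisker_exchange]
    simp only [Category.assoc]
  exact key _ hκ

/-- The inclusion of the cotensor product, as a `D`-comodule morphism. -/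
def s11iota (N : Bicomodule C D) (cG : CotensorFunctor N) (Y : Comod C) :
    cG.G.obj Y ⟶ (lextendF (base K) N.toRight).obj Y.M :=
  ⟨cG.ι Y, cG.colinear Y⟩

lemma s11_mono (N : Bicomodule C D)
    (hpres : ∀ Y : Comod C, PreservesEqualizerOf (postF (base K) D.X)
      (cotensorFst Y N.toLeft) (cotensorSnd Y N.toLeft))
    (cG : CotensorFunctor N) (Y : Comod C) {Z : base K ⟶ b}
    {u v : Z ⟶ (cG.G.obj Y).M ≫ D.X}
    (h : u ≫ cG.ι Y ▷ D.X = v ≫ cG.ι Y ▷ D.X) : u = v := by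
  obtain ⟨L⟩ := hpres Y (Fork.ofι (cG.ι Y) (cG.w Y)) (cG.isLimit Y)
  apply L.hom_ext
  rintro (_ | _)
  · exact h
  · show u ≫ (postF (base K) D.X).map (cG.ι Y ≫ cotensorFst Y N.toLeft)
        = v ≫ (postF (base K) D.X).map (cG.ι Y ≫ cotensorFst Y N.toLeft)
    have h' : u ≫ (postF (base K) D.X).map (cG.ι Y)
        = v ≫ (postF (base K) D.X).map (cG.ι Y) := h
    erw [Functor.map_comp, ← Category.assoc, ← Category.assoc, h']

set_option maxHeartbeats 1600000 in
/-- The backward map of the hom-equivalence. -/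
def s11bwd (N : Bicomodule C D) (H : Comod D ⥤ (base K ⟶ a))
    (adj : H ⊣ lextendF (base K) N.toRight)
    (H' : Comod D ⥤ Comod C)
    (hobj : ∀ X : Comod D, (H'.obj X).M = H.obj X)
    (hxc : ∀ X : Comod D, (H'.obj X).M ≫ C.X = H.obj X ≫ C.X)
    (hcoact : ∀ X : Comod D,
      (adj.unit.app X).f ≫ H.obj X ◁ N.lcoact ≫ (α_ (H.obj X) C.X N.M).inv =
      (adj.unit.app X).f ≫
        ((eqToHom (hobj X).symm ≫ (H'.obj X).coact ≫ eqToHom (hxc X)) ▷ N.M))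
    (cG : CotensorFunctor N) (X : Comod D) (Y : Comod C)
    (g : X ⟶ cG.G.obj Y) : H'.obj X ⟶ Y :=
  ⟨eqToHom (hobj X) ≫ (adj.homEquiv X Y.M).symm (g ≫ s11iota N cG Y), by
    set f' : H.obj X ⟶ Y.M := (adj.homEquiv X Y.M).symm (g ≫ s11iota N cG Y) with hf'
    have h1 : (adj.unit.app X).f ≫ f' ▷ N.M = g.f ≫ cG.ι Y := by
      have h2 := s11_homEquiv_f N H adj X f'
      rw [show (adj.homEquiv X Y.M) f' = g ≫ s11iota N cG Y from
        Equiv.apply_symm_apply _ _] at h2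
      exact h2.symm
    have main : (eqToHom (hobj X).symm ≫ (H'.obj X).coact ≫ eqToHom (hxc X)) ≫ f' ▷ C.X
        = f' ≫ Y.coact := by
      apply s11_adj_inj N H adj X
      rw [s11_key N H adj X _ (hcoact X) f', comp_whiskerRight]
      erw [← Category.assoc, ← Category.assoc, h1, ← Category.assoc, h1]
      simp only [Category.assoc]
      exact congrArg (g.f ≫ ·) (cG.w Y).symm
    rw [comp_whiskerRight, s11_eqToHom_whiskerRight (hobj X) C.X (hxc X)]
    have h3 : (H'.obj X).coact ≫ eqToHom (hxc X) ≫ f' ▷ C.X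
        = eqToHom (hobj X) ≫
            ((eqToHom (hobj X).symm ≫ (H'.obj X).coact ≫ eqToHom (hxc X)) ≫ f' ▷ C.X) := by
      simp only [Category.assoc, eqToHom_trans_assoc, eqToHom_refl, Category.id_comp]
    rw [h3, main]
    simp only [Category.assoc]⟩

set_option maxHeartbeats 1600000 in
lemma s11_fork (N : Bicomodule C D) (H : Comod D ⥤ (base K ⟶ a))
    (adj : H ⊣ lextendF (base K) N.toRight)
    (H' : Comod D ⥤ Comod C)
    (hobj : ∀ X : Comod D, (H'.obj X).M = H.obj X)
    (hxc : ∀ X : Comod D, (H'.obj X).M ≫ C.X = H.obj X ≫ C.X)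
    (hcoact : ∀ X : Comod D,
      (adj.unit.app X).f ≫ H.obj X ◁ N.lcoact ≫ (α_ (H.obj X) C.X N.M).inv =
      (adj.unit.app X).f ≫
        ((eqToHom (hobj X).symm ≫ (H'.obj X).coact ≫ eqToHom (hxc X)) ▷ N.M))
    (X : Comod D) (Y : Comod C) (f : H'.obj X ⟶ Y) :
    ((adj.homEquiv X Y.M) (eqToHom (hobj X).symm ≫ f.f)).f ≫ cotensorFst Y N.toLeft
      = ((adj.homEquiv X Y.M) (eqToHom (hobj X).symm ≫ f.f)).f ≫ cotensorSnd Y N.toLeft := by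
  rw [s11_homEquiv_f]
  have hc : (eqToHom (hobj X).symm ≫ f.f) ≫ Y.coact
      = (eqToHom (hobj X).symm ≫ (H'.obj X).coact ≫ eqToHom (hxc X)) ≫
          (eqToHom (hobj X).symm ≫ f.f) ▷ C.X := by
    rw [comp_whiskerRight, s11_eqToHom_whiskerRight (hobj X).symm C.X (hxc X).symm]
    simp only [Category.assoc, eqToHom_trans_assoc, eqToHom_refl, Category.id_comp]
    rw [← f.colinear]
  show (adj.unit.app X).f ≫ (eqToHom (hobj X).symm ≫ f.f) ▷ N.M ≫ Y.coact ▷ N.M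
      = (adj.unit.app X).f ≫ (eqToHom (hobj X).symm ≫ f.f) ▷ N.M ≫
          (Y.M ◁ N.lcoact ≫ (α_ Y.M C.X N.M).inv)
  calc (adj.unit.app X).f ≫ (eqToHom (hobj X).symm ≫ f.f) ▷ N.M ≫ Y.coact ▷ N.M
      = (adj.unit.app X).f ≫ ((eqToHom (hobj X).symm ≫ f.f) ≫ Y.coact) ▷ N.M := by
        erw [← comp_whiskerRight]
    _ = (adj.unit.app X).f ≫
          ((eqToHom (hobj X).symm ≫ (H'.obj X).coact ≫ eqToHom (hxc X)) ≫
            (eqToHom (hobj X).symm ≫ f.f) ▷ C.X) ▷ N.M := by rw [hc]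
    _ = (adj.unit.app X).f ≫ (eqToHom (hobj X).symm ≫ f.f) ▷ N.M ≫
          Y.M ◁ N.lcoact ≫ (α_ Y.M C.X N.M).inv :=
        s11_key N H adj X _ (hcoact X) _
    _ = _ := by simp only [Category.assoc]

set_option maxHeartbeats 1600000 in
/-- The forward map of the hom-equivalence. -/
def s11fwd (N : Bicomodule C D)
    (hpres : ∀ Y : Comod C, PreservesEqualizerOf (postF (base K) D.X)
      (cotensorFst Y N.toLeft) (cotensorSnd Y N.toLeft))
    (H : Comod D ⥤ (base K ⟶ a))
    (adj : H ⊣ lextendF (base K) N.toRight)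
    (H' : Comod D ⥤ Comod C)
    (hobj : ∀ X : Comod D, (H'.obj X).M = H.obj X)
    (hxc : ∀ X : Comod D, (H'.obj X).M ≫ C.X = H.obj X ≫ C.X)
    (hcoact : ∀ X : Comod D,
      (adj.unit.app X).f ≫ H.obj X ◁ N.lcoact ≫ (α_ (H.obj X) C.X N.M).inv =
      (adj.unit.app X).f ≫
        ((eqToHom (hobj X).symm ≫ (H'.obj X).coact ≫ eqToHom (hxc X)) ▷ N.M))
    (cG : CotensorFunctor N) (X : Comod D) (Y : Comod C)
    (f : H'.obj X ⟶ Y) : X ⟶ cG.G.obj Y :=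
  ⟨(Fork.IsLimit.lift' (cG.isLimit Y)
      ((adj.homEquiv X Y.M) (eqToHom (hobj X).symm ≫ f.f)).f
      (s11_fork N H adj H' hobj hxc hcoact X Y f)).1, by
    apply s11_mono N hpres cG Y
    have hlift : (Fork.IsLimit.lift' (cG.isLimit Y)
        ((adj.homEquiv X Y.M) (eqToHom (hobj X).symm ≫ f.f)).f
        (s11_fork N H adj H' hobj hxc hcoact X Y f)).1 ≫ cG.ι Y
        = ((adj.homEquiv X Y.M) (eqToHom (hobj X).symm ≫ f.f)).f :=
      (Fork.IsLimit.lift' (cG.isLimit Y)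
        ((adj.homEquiv X Y.M) (eqToHom (hobj X).symm ≫ f.f)).f
        (s11_fork N H adj H' hobj hxc hcoact X Y f)).2
    have hcol := ((adj.homEquiv X Y.M) (eqToHom (hobj X).symm ≫ f.f)).colinear
    simp only [Category.assoc]
    erw [← comp_whiskerRight, hlift, hcol, cG.colinear Y]
    exact ((congrArg (· ≫ (Y.M ◁ N.rcoact ≫ (α_ Y.M N.M D.X).inv)) hlift).symm.trans
      (Category.assoc _ _ _))⟩

set_option maxHeartbeats 1600000 in
lemma s11fwd_ι (N : Bicomodule C D)
    (hpres : ∀ Y : Comod C, PreservesEqualizerOf (postF (base K) D.X)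
      (cotensorFst Y N.toLeft) (cotensorSnd Y N.toLeft))
    (H : Comod D ⥤ (base K ⟶ a))
    (adj : H ⊣ lextendF (base K) N.toRight)
    (H' : Comod D ⥤ Comod C)
    (hobj : ∀ X : Comod D, (H'.obj X).M = H.obj X)
    (hxc : ∀ X : Comod D, (H'.obj X).M ≫ C.X = H.obj X ≫ C.X)
    (hcoact : ∀ X : Comod D,
      (adj.unit.app X).f ≫ H.obj X ◁ N.lcoact ≫ (α_ (H.obj X) C.X N.M).inv =
      (adj.unit.app X).f ≫
        ((eqToHom (hobj X).symm ≫ (H'.obj X).coact ≫ eqToHom (hxc X)) ▷ N.M))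
    (cG : CotensorFunctor N) (X : Comod D) (Y : Comod C)
    (f : H'.obj X ⟶ Y) :
    (s11fwd N hpres H adj H' hobj hxc hcoact cG X Y f).f ≫ cG.ι Y
      = ((adj.homEquiv X Y.M) (eqToHom (hobj X).symm ≫ f.f)).f :=
  (Fork.IsLimit.lift' (cG.isLimit Y)
      ((adj.homEquiv X Y.M) (eqToHom (hobj X).symm ≫ f.f)).f
      (s11_fork N H adj H' hobj hxc hcoact X Y f)).2

end S11Aux

set_option maxHeartbeats 1600000 in
/-- Let `N` be a `(C,D)`-bicomodule such that `D` (as a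
left `B`-module) preserves the equalizer of `(ρ_Y ⊗_A N, Y ⊗_A λ_N)` for
every right `C`-comodule `Y`.  If `N` is quasi-finite as a right
`D`-comodule, i.e. `- ⊗_A N : Mod-A ⥤ Comod-D` has a left adjoint `H`, then
`H`, viewed as a functor `Comod-D ⥤ Comod-C` via the coaction induced by the
unit `θ` of the adjunction, is left adjoint to `- □_C N : Comod-C ⥤ Comod-D`. -/
theorem statement11 {K : Type u} [CommRing K] {a b : Alg K}
    {C : Coring a} {D : Coring b} (N : Bicomodule C D)
    (hpres : ∀ Y : Comod C, PreservesEqualizerOf (postF (base K) D.X)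
      (cotensorFst Y N.toLeft) (cotensorSnd Y N.toLeft))
    -- the left adjoint `H = h_D(N,-)` of `- ⊗_A N`
    (H : Comod D ⥤ (base K ⟶ a)) (adj : H ⊣ lextendF (base K) N.toRight)
    -- the lift `H'` of `H` along the forgetful functor, with coaction
    -- determined by `(id ⊗ λ_N) θ_X = (ρ ⊗ id) θ_X`
    (H' : Comod D ⥤ Comod C)
    (hobj : ∀ X : Comod D, (H'.obj X).M = H.obj X)
    (hxc : ∀ X : Comod D, (H'.obj X).M ≫ C.X = H.obj X ≫ C.X)
    (hcoact : ∀ X : Comod D,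
      (adj.unit.app X).f ≫ H.obj X ◁ N.lcoact ≫ (α_ (H.obj X) C.X N.M).inv =
      (adj.unit.app X).f ≫
        ((eqToHom (hobj X).symm ≫ (H'.obj X).coact ≫ eqToHom (hxc X)) ▷ N.M))
    (hmap : ∀ {X Y : Comod D} (g : X ⟶ Y),
      (H'.map g).f = eqToHom (hobj X) ≫ H.map g ≫ eqToHom (hobj Y).symm)
    -- a cotensor-product functor `- □_C N`
    (cG : CotensorFunctor N) :
    Nonempty (H' ⊣ cG.G) := by
  refine ⟨Adjunction.mkOfHomEquiv
    { homEquiv := fun X Y =>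
        { toFun := s11fwd N hpres H adj H' hobj hxc hcoact cG X Y
          invFun := s11bwd N H adj H' hobj hxc hcoact cG X Y
          left_inv := ?_
          right_inv := ?_ }
      homEquiv_naturality_left_symm := ?_
      homEquiv_naturality_right := ?_ }⟩
  · -- left_inv
    intro f
    apply comodHom_ext'
    show eqToHom (hobj X) ≫ (adj.homEquiv X Y.M).symm
        (s11fwd N hpres H adj H' hobj hxc hcoact cG X Y f ≫ s11iota N cG Y) = f.f
    have h1 : s11fwd N hpres H adj H' hobj hxc hcoact cG X Y f ≫ s11iota N cG Y
        = (adj.homEquiv X Y.M) (eqToHom (hobj X).symm ≫ f.f) := by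
      apply comodHom_ext'
      show (s11fwd N hpres H adj H' hobj hxc hcoact cG X Y f).f ≫ cG.ι Y = _
      exact s11fwd_ι N hpres H adj H' hobj hxc hcoact cG X Y f
    rw [h1, Equiv.symm_apply_apply]
    simp only [eqToHom_trans_assoc, eqToHom_refl, Category.id_comp]
  · -- right_inv
    intro g
    apply comodHom_ext'
    apply Fork.IsLimit.hom_ext (cG.isLimit Y)
    show (s11fwd N hpres H adj H' hobj hxc hcoact cG X Y
        (s11bwd N H adj H' hobj hxc hcoact cG X Y g)).f ≫ cG.ι Y = g.f ≫ cG.ι Y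
    rw [s11fwd_ι]
    have h2 : eqToHom (hobj X).symm ≫ (s11bwd N H adj H' hobj hxc hcoact cG X Y g).f
        = (adj.homEquiv X Y.M).symm (g ≫ s11iota N cG Y) := by
      show eqToHom (hobj X).symm ≫ eqToHom (hobj X) ≫
          (adj.homEquiv X Y.M).symm (g ≫ s11iota N cG Y) = _
      simp only [eqToHom_trans_assoc, eqToHom_refl, Category.id_comp]
    rw [h2, Equiv.apply_symm_apply]
    rfl
  · -- naturality left symm
    intro X' X Y f g
    apply comodHom_ext'
    show eqToHom (hobj X') ≫ (adj.homEquiv X' Y.M).symm ((f ≫ g) ≫ s11iota N cG Y)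
        = (H'.map f ≫ s11bwd N H adj H' hobj hxc hcoact cG X Y g).f
    rw [Category.assoc, Adjunction.homEquiv_naturality_left_symm]
    show eqToHom (hobj X') ≫ H.map f ≫ (adj.homEquiv X Y.M).symm (g ≫ s11iota N cG Y)
        = (H'.map f).f ≫ eqToHom (hobj X) ≫ (adj.homEquiv X Y.M).symm (g ≫ s11iota N cG Y)
    rw [hmap f]
    simp only [Category.assoc, eqToHom_trans_assoc, eqToHom_refl, Category.id_comp]
  · -- naturality right
    intro X Y Y' f g
    apply comodHom_ext'
    apply Fork.IsLimit.hom_ext (cG.isLimit Y')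
    show (s11fwd N hpres H adj H' hobj hxc hcoact cG X Y' (f ≫ g)).f ≫ cG.ι Y'
        = ((s11fwd N hpres H adj H' hobj hxc hcoact cG X Y f).f ≫ (cG.G.map g).f) ≫ cG.ι Y'
    rw [s11fwd_ι]
    conv_rhs => rw [Category.assoc, cG.natural g, ← Category.assoc, s11fwd_ι]
    rw [s11_homEquiv_f, s11_homEquiv_f]
    simp only [comod_comp_f, comp_whiskerRight, Category.assoc]
    exact (Category.assoc _ _ _).symm

end CoringSep
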